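/- Voronoi cells are closed under shortest paths from their site: if v ∈ Vor(s), dist_H(s,v) < ∞, and u is a vertex of H lying on a shortest s-to-v walk in H (i.e., dist_H(s,u) + dist_H(u,v) = dist_H(s,v)), then u ∈ Vor(s). -/

import Mathlib

/-!
Moving from `v` back to `u` along a shortest walk from `s` lowers `d^ω(s, ·)` by exactly
`dist_H(u, v)`, while by the triangle inequality it lowers `d^ω(s', ·)` by at most that much;
so the lexicographic advantage of `s` over every other site persists at `u`.
-/

open scoped ENNReal

/-- A finite directed graph on vertex type `V`, with an adjacency relation and
real-valued edge lengths. -/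
structure DiGraph (V : Type) where
  Adj : V → V → Prop
  len : V → V → ℝ

namespace DiGraph

variable {V : Type}

/-- `G.IsWalk a b l` : `l` is (the vertex list of) a directed walk from `a` to `b` in `G`. -/
inductive IsWalk (G : DiGraph V) : V → V → List V → Prop
  | single (a : V) : IsWalk G a a [a]
  | cons {a b c : V} {l : List V} (h : G.Adj a b) (hw : IsWalk G b c l) :
      IsWalk G a c (a :: l)

/-- Total length of a walk given by its vertex list. -/
noncomputable def walkLen (G : DiGraph V) : List V → ℝ
  | a :: b :: l => G.len a b + G.walkLen (b :: l)
  | _ => 0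

/-- `dist G a b` : the infimum, in `ℝ≥0∞`, of the lengths of directed walks
from `a` to `b` (`∞` if there is no such walk). -/
noncomputable def dist (G : DiGraph V) (a b : V) : ℝ≥0∞ :=
  sInf {x : ℝ≥0∞ | ∃ l, G.IsWalk a b l ∧ x = ENNReal.ofReal (G.walkLen l)}

/-- The additively weighted distance `d^ω(s,v) = ω(s) + dist_H(s,v)`, valued in `EReal`
so that arbitrary (possibly infinite) additive weights can be accommodated. -/
noncomputable def dOm (H : DiGraph V) (ω : V → EReal) (s v : V) : EReal :=
  ω s + ((H.dist s v : ℝ≥0∞) : EReal)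

/-- The Voronoi cell of a site `s ∈ S`: the set of vertices `v` of `H` such that for all
`s' ∈ S` with `s' ≠ s`, the pair `(d^ω(s,v), −ω(s))` is lexicographically strictly smaller
than `(d^ω(s',v), −ω(s'))`. -/
def Vor (H : DiGraph V) (HV : Set V) (S : Finset V) (ω : V → EReal) (s : V) : Set V :=
  {v ∈ HV | ∀ s' ∈ S, s' ≠ s →
    dOm H ω s v < dOm H ω s' v ∨ (dOm H ω s v = dOm H ω s' v ∧ ω s' < ω s)}

end DiGraph

lemma lex_lt_of_shift {a a' x x' y y' e : ℝ} (hx : x = x' + e) (hy : y ≤ y' + e)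
    (h : a + x < a' + y ∨ (a + x = a' + y ∧ a' < a)) :
    a + x' < a' + y' ∨ (a + x' = a' + y' ∧ a' < a) := by
  rcases h with h | ⟨h, ha⟩
  · exact .inl (by linarith)
  · rcases (show a + x' ≤ a' + y' by linarith).lt_or_eq with hlt | heq
    · exact .inl hlt
    · exact .inr ⟨heq, ha⟩

namespace DiGraph

variable {V : Type}

section Walks

variable {G : DiGraph V}

lemma IsWalk.exists_eq_cons {a b : V} {l : List V} (h : G.IsWalk a b l) :
    ∃ t, l = a :: t := by
  cases h <;> exact ⟨_, rfl⟩

lemma IsWalk.append_tail {a b c : V} {l₁ l₂ : List V}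
    (h₁ : G.IsWalk a b l₁) (h₂ : G.IsWalk b c l₂) :
    G.IsWalk a c (l₁ ++ l₂.tail) ∧ G.walkLen (l₁ ++ l₂.tail) = G.walkLen l₁ + G.walkLen l₂ := by
  induction h₁ with
  | single a =>
    obtain ⟨t, rfl⟩ := h₂.exists_eq_cons
    simpa [walkLen] using h₂
  | @cons a b _ l hab hw ih =>
    obtain ⟨t, rfl⟩ := hw.exists_eq_cons
    obtain ⟨hwalk, hlen⟩ := ih h₂
    refine ⟨.cons hab hwalk, ?_⟩
    simp only [List.cons_append, walkLen] at hlen ⊢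
    rw [hlen, add_assoc]

lemma dist_le_walkLen {a b : V} {l : List V} (h : G.IsWalk a b l) :
    G.dist a b ≤ ENNReal.ofReal (G.walkLen l) :=
  sInf_le ⟨l, h, rfl⟩

lemma dist_triangle (a b c : V) : G.dist a c ≤ G.dist a b + G.dist b c := by
  rw [dist.eq_1 G a b, dist.eq_1 G b c, sInf_eq_iInf, sInf_eq_iInf]
  refine ENNReal.le_iInf₂_add_iInf₂ ?_
  rintro _ ⟨l₁, h₁, rfl⟩ _ ⟨l₂, h₂, rfl⟩
  obtain ⟨hwalk, hlen⟩ := h₁.append_tail h₂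
  calc G.dist a c ≤ ENNReal.ofReal (G.walkLen (l₁ ++ l₂.tail)) := dist_le_walkLen hwalk
    _ = ENNReal.ofReal (G.walkLen l₁ + G.walkLen l₂) := by rw [hlen]
    _ ≤ _ := ENNReal.ofReal_add_le

end Walks

lemma dOm_coe_of_ne_top (H : DiGraph V) (ω : V → ℝ) {s v : V} (h : H.dist s v ≠ ⊤) :
    dOm H (fun x => ((ω x : ℝ) : EReal)) s v = ((ω s + (H.dist s v).toReal : ℝ) : EReal) := by
  rw [dOm, EReal.coe_add, EReal.coe_ennreal_toReal h]

lemma dOm_coe_of_eq_top (H : DiGraph V) (ω : V → ℝ) {s v : V} (h : H.dist s v = ⊤) :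
    dOm H (fun x => ((ω x : ℝ) : EReal)) s v = ⊤ := by
  rw [dOm, h, EReal.coe_ennreal_top, EReal.coe_add_top]

def Beats (H : DiGraph V) (ω : V → EReal) (s s' v : V) : Prop :=
  dOm H ω s v < dOm H ω s' v ∨ (dOm H ω s v = dOm H ω s' v ∧ ω s' < ω s)

lemma Beats.of_shortest (H : DiGraph V) (ω : V → ℝ) {s s' u v : V}
    (hfin : H.dist s v ≠ ⊤) (hshort : H.dist s u + H.dist u v = H.dist s v)
    (h : H.Beats (fun x => (ω x : EReal)) s s' v) :
    H.Beats (fun x => (ω x : EReal)) s s' u := by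
  obtain ⟨hsu, huv⟩ := ENNReal.add_ne_top.1 (hshort ▸ hfin)
  unfold Beats at h ⊢
  rw [dOm_coe_of_ne_top H ω hsu]
  by_cases hs'u : H.dist s' u = ⊤
  · exact .inl (dOm_coe_of_eq_top H ω hs'u ▸ EReal.coe_lt_top _)
  have htri := H.dist_triangle s' u v
  have hs'v : H.dist s' v ≠ ⊤ := ne_top_of_le_ne_top (ENNReal.add_ne_top.2 ⟨hs'u, huv⟩) htri
  rw [dOm_coe_of_ne_top H ω hfin, dOm_coe_of_ne_top H ω hs'v] at h
  rw [dOm_coe_of_ne_top H ω hs'u]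
  simp only [EReal.coe_lt_coe_iff, EReal.coe_eq_coe_iff] at h ⊢
  refine lex_lt_of_shift (e := (H.dist u v).toReal) ?_ ?_ h
  · rw [← ENNReal.toReal_add hsu huv, hshort]
  · rw [← ENNReal.toReal_add hs'u huv]
    exact ENNReal.toReal_mono (ENNReal.add_ne_top.2 ⟨hs'u, huv⟩) htri

end DiGraph

theorem stmt3_general {V : Type} (H : DiGraph V) (HV : Set V) (S : Finset V)
    (ω : V → ℝ) (s : V)
    (v : V) (hv : v ∈ DiGraph.Vor H HV S (fun x => ((ω x : ℝ) : EReal)) s)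
    (hfin : H.dist s v < ⊤)
    (u : V) (hu : u ∈ HV) (hshort : H.dist s u + H.dist u v = H.dist s v) :
    u ∈ DiGraph.Vor H HV S (fun x => ((ω x : ℝ) : EReal)) s :=
  ⟨hu, fun s' hs' hne => DiGraph.Beats.of_shortest H ω hfin.ne hshort (hv.2 s' hs' hne)⟩

/-- Voronoi cells are closed under shortest paths from their site: if
`v ∈ Vor(s)`, `dist_H(s,v) < ∞`, and `u` is a vertex of `H` lying on a shortest
`s`-to-`v` walk in `H` (i.e. `dist_H(s,u) + dist_H(u,v) = dist_H(s,v)`), then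
`u ∈ Vor(s)`. -/
theorem stmt3 {V : Type} [Fintype V] (G H : DiGraph V) (HV : Set V) (S : Finset V)
    (hpos : ∀ a b, G.Adj a b → 0 < G.len a b)
    (hsub : ∀ a b, H.Adj a b → G.Adj a b) (hlen : H.len = G.len)
    (hHVedge : ∀ a b, H.Adj a b → a ∈ HV ∧ b ∈ HV)
    (hS : S.Nonempty) (hSH : ↑S ⊆ HV)
    (ω : V → ℝ) (s : V) (hs : s ∈ S)
    (v : V) (hv : v ∈ DiGraph.Vor H HV S (fun x => ((ω x : ℝ) : EReal)) s)
    (hfin : H.dist s v < ⊤)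
    (u : V) (hu : u ∈ HV) (hshort : H.dist s u + H.dist u v = H.dist s v) :
    u ∈ DiGraph.Vor H HV S (fun x => ((ω x : ℝ) : EReal)) s :=
  stmt3_general H HV S ω s v hv hfin u hu hshort
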